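/- There are exactly 56 matrices in M_3(F_2) whose characteristic polynomial is t³ + 1. -/

import Mathlib

/-!
Over any commutative ring a `3 × 3` matrix has characteristic polynomial
`X³ - tr(M) X² + s₂(M) X - det M`, with `s₂` the sum of the principal `2 × 2` minors.
So `charpoly M = X³ + 1` means `tr M = 0`, `s₂ M = 0` and `det M = -1`; over `𝔽₂` these are
polynomial conditions in the nine entries, and counting their solutions is a finite check
over the `2⁹` matrices.
-/

open Polynomial

namespace Matrix

variable {R : Type*} [CommRing R]

def sumPrincipalMinorsTwo (M : Matrix (Fin 3) (Fin 3) R) : R :=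
  M 0 0 * M 1 1 - M 0 1 * M 1 0 + M 0 0 * M 2 2 - M 0 2 * M 2 0 + M 1 1 * M 2 2 - M 1 2 * M 2 1

theorem charpoly_fin_three (M : Matrix (Fin 3) (Fin 3) R) :
    M.charpoly =
      X ^ 3 - C M.trace * X ^ 2 + C M.sumPrincipalMinorsTwo * X - C M.det := by
  rw [charpoly, det_fin_three, det_fin_three, trace_fin_three, sumPrincipalMinorsTwo]
  simp only [charmatrix_apply, Fin.isValue, Fin.reduceEq, diagonal_apply_eq,
    diagonal_apply_ne, ne_eq, not_false_eq_true, map_add, map_sub, map_mul]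
  ring

end Matrix

theorem cubic_eq_X_pow_three_add_one_iff {R : Type*} [CommRing R] (a b c : R) :
    X ^ 3 - C a * X ^ 2 + C b * X - C c = (X ^ 3 + 1 : R[X]) ↔ a = 0 ∧ b = 0 ∧ c = -1 := by
  constructor
  · intro h
    refine ⟨?_, ?_, neg_eq_iff_eq_neg.mp ?_⟩
    · simpa [coeff_X, coeff_C, coeff_one] using congrArg (coeff · 2) h
    · simpa [coeff_X, coeff_C, coeff_one] using congrArg (coeff · 1) h
    · simpa [coeff_X, coeff_C, coeff_one] using congrArg (coeff · 0) h
  · rintro ⟨rfl, rfl, rfl⟩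
    simp

theorem stmt_8 :
    Nat.card {M : Matrix (Fin 3) (Fin 3) (ZMod 2) |
      M.charpoly = X ^ 3 + 1} = 56 := by
  simp_rw [Matrix.charpoly_fin_three, cubic_eq_X_pow_three_add_one_iff, Matrix.trace_fin_three,
    Matrix.det_fin_three, Matrix.sumPrincipalMinorsTwo]
  rw [Nat.card_eq_fintype_card, Fintype.card_ofFinset]
  decide
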